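/- arXiv:2510.06642 — 2 statements merged into one kernel-verified Lean document; each statement's English description precedes it below -/
import Mathlib

section
/- Suppose c ≠ 0. For any x ∈ ℝⁿ, there exists a unique w ∈ ℝ such that f(x,w) = c, where f(x,w) = Σᵢ μᵢ · sign(xᵢ - wμᵢ)·(|xᵢ - wμᵢ| - λ)₊. -/
open Finset

/-- Scalar soft-thresholding: `Prox_{λ|·|}(t) = sign(t)·(|t|-λ)₊`. -/
noncomputable def st (lam t : ℝ) : ℝ := Real.sign t * max (|t| - lam) 0

lemma st_eq (lam t : ℝ) (h : 0 ≤ lam) :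
    st lam t = max (t - lam) 0 + min (t + lam) 0 := by
  unfold st
  rcases lt_trichotomy t 0 with ht | ht | ht
  · rw [Real.sign_of_neg ht, abs_of_neg ht]
    rcases le_total (t + lam) 0 with h2 | h2
    · rw [max_eq_left (show (0:ℝ) ≤ -t - lam by linarith),
        max_eq_right (show t - lam ≤ (0:ℝ) by linarith), min_eq_left h2]
      ring
    · rw [max_eq_right (show -t - lam ≤ (0:ℝ) by linarith),
        max_eq_right (show t - lam ≤ (0:ℝ) by linarith), min_eq_right h2]
      ring
  · simp [ht, h]
  · rw [Real.sign_of_pos ht, abs_of_pos ht, one_mul,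
      min_eq_right (by linarith)]
    ring

lemma st_mono (lam : ℝ) (h : 0 ≤ lam) : Monotone (st lam) := by
  intro a b hab
  rw [st_eq _ _ h, st_eq _ _ h]
  exact add_le_add (max_le_max (by linarith) le_rfl)
    (min_le_min (by linarith) le_rfl)

lemma st_cont (lam : ℝ) (h : 0 ≤ lam) : Continuous (st lam) := by
  have : (st lam) = fun t => max (t - lam) 0 + min (t + lam) 0 := by
    funext t; exact st_eq lam t h
  rw [this]
  exact ((continuous_id.sub continuous_const).max continuous_const).add
    ((continuous_id.add continuous_const).min continuous_const)

lemma st_bounds (lam t : ℝ) (h : 0 ≤ lam) :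
    t - lam ≤ st lam t ∧ st lam t ≤ t + lam := by
  rw [st_eq _ _ h]
  constructor
  · rcases le_total (t + lam) 0 with h2 | h2
    · rw [min_eq_left h2, max_eq_right (by linarith)]; linarith
    · rw [min_eq_right h2]
      have := le_max_left (t - lam) 0; linarith
  · rcases le_total (t - lam) 0 with h1 | h1
    · rw [max_eq_right h1]
      have := min_le_left (t + lam) 0; linarith
    · rw [max_eq_left h1, min_eq_right (by linarith)]; linarith

lemma st_flat {lam t t' : ℝ} (h : 0 ≤ lam) (htt : t < t')
    (he : st lam t = st lam t') : st lam t = 0 := by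
  rw [st_eq lam t h, st_eq lam t' h] at he
  rw [st_eq lam t h]
  have ha : max (t - lam) 0 ≤ max (t' - lam) 0 :=
    max_le_max (by linarith) le_rfl
  have hb : min (t + lam) 0 ≤ min (t' + lam) 0 :=
    min_le_min (by linarith) le_rfl
  have ha' : max (t - lam) 0 = max (t' - lam) 0 := by linarith
  have hb' : min (t + lam) 0 = min (t' + lam) 0 := by linarith
  have hA : max (t - lam) 0 = 0 := by
    by_contra hA0
    have hpos : 0 < max (t - lam) 0 := lt_of_le_of_ne (le_max_right _ _) (Ne.symm hA0)
    have ht1 : 0 < t - lam := by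
      by_contra hle
      push_neg at hle
      rw [max_eq_right hle] at hpos; linarith
    rw [max_eq_left ht1.le, max_eq_left (by linarith)] at ha'
    linarith
  have hB : min (t + lam) 0 = 0 := by
    by_contra hB0
    have hneg : min (t' + lam) 0 < 0 := by
      rw [← hb']
      exact lt_of_le_of_ne (min_le_right _ _) hB0
    have ht2 : t' + lam < 0 := by
      by_contra hle
      push_neg at hle
      rw [min_eq_right hle] at hneg; linarith
    rw [min_eq_left ht2.le, min_eq_left (by linarith)] at hb'
    linarith
  rw [hA, hB]; ring

/-- If `c ≠ 0`, then for any `x` there is a unique `w` with `f(x,w) = c`. -/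
theorem stmt3 (n : ℕ) (hn : 0 < n) (μ : Fin n → ℝ) (hμ : ∀ i, μ i ≠ 0)
    (lam : ℝ) (hlam : 0 < lam) (c : ℝ) (hc : c ≠ 0) (x : Fin n → ℝ) :
    ∃! w : ℝ, ∑ i, μ i * st lam (x i - w * μ i) = c := by
  set F : ℝ → ℝ := fun w => ∑ i, μ i * st lam (x i - w * μ i) with hF
  have hl := hlam.le
  -- antitone per term
  have hanti : ∀ i : Fin n, ∀ w₁ w₂ : ℝ, w₁ ≤ w₂ →
      μ i * st lam (x i - w₂ * μ i) ≤ μ i * st lam (x i - w₁ * μ i) := by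
    intro i w₁ w₂ h12
    rcases (hμ i).lt_or_gt with hneg | hpos
    · have : x i - w₁ * μ i ≤ x i - w₂ * μ i := by nlinarith
      exact mul_le_mul_of_nonpos_left (st_mono lam hl this) hneg.le
    · have : x i - w₂ * μ i ≤ x i - w₁ * μ i := by nlinarith
      exact mul_le_mul_of_nonneg_left (st_mono lam hl this) hpos.le
  -- uniqueness core
  have key : ∀ w₁ w₂ : ℝ, w₁ < w₂ → F w₁ = c → F w₂ = c → False := by
    intro w₁ w₂ h12 h1 h2
    have hle : ∀ i ∈ Finset.univ, μ i * st lam (x i - w₂ * μ i) ≤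
        μ i * st lam (x i - w₁ * μ i) := fun i _ => hanti i w₁ w₂ h12.le
    have hsum : ∑ i, μ i * st lam (x i - w₂ * μ i) =
        ∑ i, μ i * st lam (x i - w₁ * μ i) := by
      rw [show (∑ i, μ i * st lam (x i - w₂ * μ i)) = F w₂ from rfl,
        show (∑ i, μ i * st lam (x i - w₁ * μ i)) = F w₁ from rfl, h1, h2]
    have heach : ∀ i ∈ Finset.univ, μ i * st lam (x i - w₂ * μ i) =
        μ i * st lam (x i - w₁ * μ i) :=
      (Finset.sum_eq_sum_iff_of_le hle).mp hsum
    have hzero : ∀ i : Fin n, st lam (x i - w₁ * μ i) = 0 := by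
      intro i
      have heq : st lam (x i - w₂ * μ i) = st lam (x i - w₁ * μ i) :=
        mul_left_cancel₀ (hμ i) (heach i (Finset.mem_univ i))
      rcases (hμ i).lt_or_gt with hneg | hpos
      · have hlt : x i - w₁ * μ i < x i - w₂ * μ i := by nlinarith
        exact st_flat hl hlt heq.symm
      · have hlt : x i - w₂ * μ i < x i - w₁ * μ i := by nlinarith
        rw [← heq]
        exact st_flat hl hlt heq
    apply hc
    rw [← h1, hF]
    simp only [hzero, mul_zero, Finset.sum_const_zero]
  -- existence via IVT
  have hcont : Continuous F := by
    apply continuous_finset_sum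
    intro i _
    exact continuous_const.mul ((st_cont lam hl).comp
      (continuous_const.sub (continuous_id.mul continuous_const)))
  set A : ℝ := ∑ i, μ i * x i with hA
  set S : ℝ := ∑ i, μ i ^ 2 with hS
  set B : ℝ := lam * ∑ i, |μ i| with hB
  have hSpos : 0 < S := by
    haveI : Nonempty (Fin n) := Fin.pos_iff_nonempty.mp hn
    apply Finset.sum_pos
    · intro i _
      have := hμ i
      positivity
    · exact Finset.univ_nonempty
  have hBnn : 0 ≤ B :=
    mul_nonneg hl (Finset.sum_nonneg fun i _ => abs_nonneg _)
  have hexp : ∀ w : ℝ, A - w * S + B = ∑ i, (μ i * x i - w * μ i ^ 2 + lam * |μ i|) := by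
    intro w
    rw [hA, hS, hB, Finset.mul_sum, Finset.mul_sum, ← Finset.sum_sub_distrib,
      ← Finset.sum_add_distrib]
  have hub : ∀ w : ℝ, F w ≤ A - w * S + B := by
    intro w
    rw [hexp w]
    apply Finset.sum_le_sum
    intro i _
    obtain ⟨hb1, hb2⟩ := st_bounds lam (x i - w * μ i) hl
    rcases (hμ i).lt_or_gt with hneg | hpos
    · rw [abs_of_neg hneg]
      nlinarith [mul_le_mul_of_nonpos_left hb1 hneg.le]
    · rw [abs_of_pos hpos]
      nlinarith [mul_le_mul_of_nonneg_left hb2 hpos.le]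
  have hlb : ∀ w : ℝ, A - w * S - B ≤ F w := by
    intro w
    have hexp' : A - w * S - B = ∑ i, (μ i * x i - w * μ i ^ 2 - lam * |μ i|) := by
      rw [hA, hS, hB, Finset.mul_sum, Finset.mul_sum, ← Finset.sum_sub_distrib,
        ← Finset.sum_sub_distrib]
    rw [hexp']
    apply Finset.sum_le_sum
    intro i _
    obtain ⟨hb1, hb2⟩ := st_bounds lam (x i - w * μ i) hl
    rcases (hμ i).lt_or_gt with hneg | hpos
    · rw [abs_of_neg hneg]
      nlinarith [mul_le_mul_of_nonpos_left hb2 hneg.le]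
    · rw [abs_of_pos hpos]
      nlinarith [mul_le_mul_of_nonneg_left hb1 hpos.le]
  set wlo : ℝ := (A - B - c) / S with hwlo
  set whi : ℝ := (A + B - c) / S with hwhi
  have hwle : wlo ≤ whi := by
    rw [hwlo, hwhi, div_le_div_iff₀ hSpos hSpos]
    nlinarith
  have h1 : F whi ≤ c := by
    have hmul : whi * S = A + B - c := div_mul_cancel₀ _ hSpos.ne'
    have := hub whi
    linarith
  have h2 : c ≤ F wlo := by
    have hmul : wlo * S = A - B - c := div_mul_cancel₀ _ hSpos.ne'
    have := hlb wlo
    linarith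
  obtain ⟨w, hwmem, hw⟩ := intermediate_value_Icc' hwle hcont.continuousOn ⟨h1, h2⟩
  refine ⟨w, hw, ?_⟩
  intro y hy
  by_contra hne
  rcases lt_or_gt_of_ne hne with h | h
  · exact key y w h hy hw
  · exact key w y h hw hy
end

section
/- Suppose c ≠ 0, x ∈ ℝⁿ with β(x) = ∅. Then the proximal map Prox_{λq}(·) of the affine-constrained ℓ1 regularizer is differentiable at x with derivative Diag(u) - (1/s) μ̃μ̃ᵀ, where uᵢ = 1 if i ∈ α(x) and 0 otherwise, μ̃ = Diag(u)μ, and s = Σ_{j∈α(x)} μⱼ². -/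
open Finset

lemma st_of_gt {lam t : ℝ} (h : lam < t) (h0 : 0 ≤ lam) : st lam t = t - lam := by
  rw [st_eq lam t h0, max_eq_left (by linarith), min_eq_right (by linarith)]; ring

lemma st_of_lt {lam t : ℝ} (h : t < -lam) (h0 : 0 ≤ lam) : st lam t = t + lam := by
  rw [st_eq lam t h0, max_eq_right (by linarith), min_eq_left (by linarith)]; ring

lemma st_of_abs_le {lam t : ℝ} (h : |t| ≤ lam) (h0 : 0 ≤ lam) : st lam t = 0 := by
  rw [abs_le] at h
  rw [st_eq lam t h0, max_eq_right (by linarith), min_eq_right (by linarith)]; ring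

private lemma st_eq_zero_core {lam p q : ℝ} (h0 : 0 ≤ lam) (hlt : p < q)
    (h : st lam p = st lam q) : st lam p = 0 := by
  rw [st_eq lam p h0, st_eq lam q h0] at h
  rw [st_eq lam p h0]
  have h1 : max (p - lam) 0 ≤ max (q - lam) 0 := by gcongr <;> linarith
  have h2 : min (p + lam) 0 ≤ min (q + lam) 0 := by gcongr <;> linarith
  have e1 : max (p - lam) 0 = max (q - lam) 0 := by linarith
  have e2 : min (p + lam) 0 = min (q + lam) 0 := by linarith
  have hq : q - lam ≤ 0 := by
    by_contra hq
    push_neg at hq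
    rw [show (q - lam) ⊔ 0 = q - lam from max_eq_left (by linarith)] at e1
    rcases le_or_gt (p - lam) 0 with h3 | h3
    · rw [max_eq_right h3] at e1; linarith
    · rw [max_eq_left h3.le] at e1; linarith
  have hp : 0 ≤ p + lam := by
    by_contra hp
    push_neg at hp
    rw [show (p + lam) ⊓ 0 = p + lam from min_eq_left (by linarith)] at e2
    rcases le_or_gt 0 (q + lam) with h3 | h3
    · rw [min_eq_right h3] at e2; linarith
    · rw [min_eq_left h3.le] at e2; linarith
  rw [max_eq_right (by linarith), min_eq_right hp]; ring

lemma st_eq_zero_of_eq {lam p q : ℝ} (h0 : 0 ≤ lam) (hpq : p ≠ q)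
    (h : st lam p = st lam q) : st lam p = 0 := by
  rcases lt_trichotomy p q with hlt | he | hlt
  · exact st_eq_zero_core h0 hlt h
  · exact absurd he hpq
  · rw [h]; exact st_eq_zero_core h0 hlt h.symm

lemma st_prox_strict {lam : ℝ} (hlam : 0 < lam) (t z : ℝ) (hz : z ≠ st lam t) :
    (1/2) * (st lam t - t)^2 + lam * |st lam t| <
      (1/2) * (z - t)^2 + lam * |z| := by
  rcases lt_or_ge lam t with h | h
  · rw [st_of_gt h hlam.le] at hz ⊢
    have hne : z - (t - lam) ≠ 0 := sub_ne_zero.mpr hz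
    have hpos : 0 < (z - (t - lam))^2 := by positivity
    rw [abs_of_pos (by linarith)]
    nlinarith [le_abs_self z, mul_pos hlam hlam]
  · rcases lt_or_ge t (-lam) with h' | h'
    · rw [st_of_lt h' hlam.le] at hz ⊢
      have hne : z - (t + lam) ≠ 0 := sub_ne_zero.mpr hz
      have hpos : 0 < (z - (t + lam))^2 := by positivity
      rw [abs_of_neg (by linarith)]
      nlinarith [neg_abs_le z, mul_pos hlam hlam]
    · have habs : |t| ≤ lam := abs_le.mpr ⟨h', h⟩
      rw [st_of_abs_le habs hlam.le] at hz ⊢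
      have hpos : 0 < z^2 := by positivity
      have h5 : z * t ≤ |z| * |t| := (le_abs_self (z*t)).trans (le_of_eq (abs_mul z t))
      have h6 : |z| * |t| ≤ |z| * lam := mul_le_mul_of_nonneg_left habs (abs_nonneg z)
      simp only [abs_zero]
      nlinarith [abs_nonneg z]

/-- The constrained prox equals the soft-threshold formula. -/
lemma P_eq {n : ℕ} (μ : Fin n → ℝ) {lam : ℝ} (hlam : 0 < lam) (c : ℝ)
    (w : (Fin n → ℝ) → ℝ)
    (hw : ∀ y : Fin n → ℝ, ∑ i, μ i * st lam (y i - w y * μ i) = c)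
    (P : (Fin n → ℝ) → (Fin n → ℝ))
    (hPfeas : ∀ y : Fin n → ℝ, ∑ i, μ i * P y i = c)
    (hPmin : ∀ y z : Fin n → ℝ, ∑ i, μ i * z i = c →
      (1/2) * ∑ i, (P y i - y i)^2 + lam * ∑ i, |P y i| ≤
        (1/2) * ∑ i, (z i - y i)^2 + lam * ∑ i, |z i|) :
    ∀ y : Fin n → ℝ, P y = fun i => st lam (y i - w y * μ i) := by
  intro y
  by_contra hne
  set W := w y with hW
  set z : Fin n → ℝ := fun i => st lam (y i - W * μ i) with hz
  obtain ⟨i0, hi0⟩ : ∃ i, P y i ≠ z i := by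
    by_contra hforall
    push_neg at hforall
    exact hne (funext hforall)
  have hsum1 : ∑ i, μ i * P y i = c := hPfeas y
  have hsum2 : ∑ i, μ i * z i = c := hw y
  have hlt : ∑ i, ((1/2) * (z i - (y i - W * μ i))^2 + lam * |z i|) <
      ∑ i, ((1/2) * (P y i - (y i - W * μ i))^2 + lam * |P y i|) := by
    apply Finset.sum_lt_sum
    · intro i _
      by_cases h : P y i = z i
      · rw [h]
      · exact (st_prox_strict hlam (y i - W * μ i) (P y i) h).le
    · exact ⟨i0, Finset.mem_univ _, st_prox_strict hlam (y i0 - W * μ i0) (P y i0) hi0⟩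
  have expand : ∀ v : Fin n → ℝ,
      (1/2) * ∑ i, (v i - y i)^2 + lam * ∑ i, |v i|
        = ∑ i, ((1/2) * (v i - (y i - W * μ i))^2 + lam * |v i|)
          - W * (∑ i, μ i * v i)
          + ∑ i, (W * μ i * y i - (1/2) * W^2 * (μ i)^2) := by
    intro v
    have hpt : ∀ i : Fin n, (1/2) * (v i - y i)^2 + lam * |v i|
        = ((1/2) * (v i - (y i - W * μ i))^2 + lam * |v i|)
          - W * (μ i * v i) + (W * μ i * y i - (1/2) * W^2 * (μ i)^2) := by
      intro i; ring
    calc (1/2) * ∑ i, (v i - y i)^2 + lam * ∑ i, |v i|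
        = ∑ i, ((1/2) * (v i - y i)^2 + lam * |v i|) := by
          rw [Finset.mul_sum, Finset.mul_sum, Finset.sum_add_distrib]
      _ = ∑ i, (((1/2) * (v i - (y i - W * μ i))^2 + lam * |v i|)
            - W * (μ i * v i) + (W * μ i * y i - (1/2) * W^2 * (μ i)^2)) :=
          Finset.sum_congr rfl (fun i _ => hpt i)
      _ = _ := by
          rw [Finset.sum_add_distrib, Finset.sum_sub_distrib, Finset.mul_sum]
  have hmin := hPmin y z hsum2
  rw [expand (P y), expand z, hsum1, hsum2] at hmin
  linarith

/-- Uniqueness of the dual multiplier. -/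
lemma w_unique {n : ℕ} (μ : Fin n → ℝ) (hμ : ∀ i, μ i ≠ 0) {lam : ℝ} (hlam : 0 < lam)
    {c : ℝ} (hc : c ≠ 0) (y : Fin n → ℝ) {a b : ℝ}
    (ha : ∑ i, μ i * st lam (y i - a * μ i) = c)
    (hb : ∑ i, μ i * st lam (y i - b * μ i) = c) : a = b := by
  have core : ∀ a b : ℝ, a < b →
      (∑ i, μ i * st lam (y i - a * μ i) = c) →
      (∑ i, μ i * st lam (y i - b * μ i) = c) → False := by
    intro a b hab ha hb
    have hterm : ∀ i ∈ Finset.univ, μ i * st lam (y i - b * μ i) ≤ μ i * st lam (y i - a * μ i) := by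
      intro i _
      rcases (hμ i).lt_or_gt with hneg | hpos
      · have harg : y i - a * μ i ≤ y i - b * μ i := by nlinarith
        have := st_mono lam hlam.le harg
        exact mul_le_mul_of_nonpos_left this hneg.le
      · have harg : y i - b * μ i ≤ y i - a * μ i := by nlinarith
        have := st_mono lam hlam.le harg
        exact mul_le_mul_of_nonneg_left this hpos.le
    have hsum : ∑ i, μ i * st lam (y i - b * μ i) = ∑ i, μ i * st lam (y i - a * μ i) :=
      hb.trans ha.symm
    have hall := (Finset.sum_eq_sum_iff_of_le hterm).mp hsum
    have hzero : ∀ i, st lam (y i - a * μ i) = 0 := by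
      intro i
      have hi := hall i (Finset.mem_univ i)
      have hst : st lam (y i - b * μ i) = st lam (y i - a * μ i) :=
        mul_left_cancel₀ (hμ i) hi
      have hne : y i - a * μ i ≠ y i - b * μ i := by
        intro hctr
        have h1 : a * μ i = b * μ i := by linarith
        exact hab.ne (mul_right_cancel₀ (hμ i) h1)
      exact st_eq_zero_of_eq hlam.le hne hst.symm
    apply hc
    rw [← ha]
    apply Finset.sum_eq_zero
    intro i _
    rw [hzero i, mul_zero]
  rcases lt_trichotomy a b with h | h | h
  · exact absurd (core a b h ha hb) not_false
  · exact h
  · exact absurd (core b a h hb ha) not_false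

/-- With `c ≠ 0` and `β(x) = ∅`, the proximal map of the affine-constrained ℓ1
regularizer is differentiable at `x` with derivative `Diag(u) - (1/s) μ̃μ̃ᵀ`, where `u`
is the indicator of `α(x)`, `μ̃ = Diag(u)μ` and `s = Σ_{j∈α(x)} μⱼ²`. -/
theorem stmt11 (n : ℕ) (μ : Fin n → ℝ) (hμ : ∀ i, μ i ≠ 0)
    (lam : ℝ) (hlam : 0 < lam) (c : ℝ) (hc : c ≠ 0)
    (w : (Fin n → ℝ) → ℝ)
    (hw : ∀ y : Fin n → ℝ, ∑ i, μ i * st lam (y i - w y * μ i) = c)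
    (P : (Fin n → ℝ) → (Fin n → ℝ))
    (hPfeas : ∀ y : Fin n → ℝ, ∑ i, μ i * P y i = c)
    (hPmin : ∀ y z : Fin n → ℝ, ∑ i, μ i * z i = c →
      (1/2) * ∑ i, (P y i - y i)^2 + lam * ∑ i, |P y i| ≤
        (1/2) * ∑ i, (z i - y i)^2 + lam * ∑ i, |z i|)
    (x : Fin n → ℝ)
    (hβ : ∀ i, |x i - w x * μ i| ≠ lam) :
    HasFDerivAt P
      (LinearMap.toContinuousLinearMap
        (Matrix.mulVecLin
          (Matrix.diagonal (fun i => if lam < |x i - w x * μ i| then (1 : ℝ) else 0)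
            - (1 / ∑ j ∈ Finset.univ.filter (fun j => lam < |x j - w x * μ j|), μ j ^ 2) •
              Matrix.of (fun i j =>
                ((if lam < |x i - w x * μ i| then (1 : ℝ) else 0) * μ i) *
                ((if lam < |x j - w x * μ j| then (1 : ℝ) else 0) * μ j))))) x := by
  classical
  have hP := P_eq μ hlam c w hw P hPfeas hPmin
  set A : Finset (Fin n) := Finset.univ.filter (fun j => lam < |x j - w x * μ j|) with hA
  set s : ℝ := ∑ j ∈ A, μ j ^ 2 with hs
  have hmemA : ∀ i, i ∈ A ↔ lam < |x i - w x * μ i| := by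
    intro i; rw [hA]; simp
  have hnotA : ∀ i, i ∉ A → |x i - w x * μ i| < lam := by
    intro i hi
    rw [hmemA] at hi
    push_neg at hi
    exact lt_of_le_of_ne hi (hβ i)
  have hAne : A.Nonempty := by
    by_contra hA0
    rw [Finset.not_nonempty_iff_eq_empty] at hA0
    apply hc
    rw [← hw x]
    apply Finset.sum_eq_zero
    intro i _
    have hi : i ∉ A := by rw [hA0]; exact Finset.notMem_empty i
    rw [st_of_abs_le (hnotA i hi).le hlam.le, mul_zero]
  have hspos : 0 < s := by
    rw [hs]
    apply Finset.sum_pos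
    · intro i _
      have := hμ i
      positivity
    · exact hAne
  set σ : Fin n → ℝ := fun i => if 0 < x i - w x * μ i then 1 else -1 with hσ
  have hsigx : ∀ i ∈ A, lam < σ i * (x i - w x * μ i) := by
    intro i hi
    rw [hmemA] at hi
    rcases abs_cases (x i - w x * μ i) with ⟨h1, h2⟩ | ⟨h1, h2⟩
    · rw [hσ]; simp only
      rw [if_pos (by rw [h1] at hi; linarith), one_mul]
      linarith [hi, h1]
    · rw [hσ]; simp only
      rw [if_neg (by linarith)]
      rw [h1] at hi; linarith
  have hstform : ∀ (i : Fin n) (r : ℝ), lam < σ i * r → st lam r = r - lam * σ i := by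
    intro i r hr
    by_cases hpos : 0 < x i - w x * μ i
    · rw [hσ] at hr ⊢
      simp only [if_pos hpos] at hr ⊢
      rw [one_mul] at hr
      rw [st_of_gt hr hlam.le]; ring
    · rw [hσ] at hr ⊢
      simp only [if_neg hpos] at hr ⊢
      have hr' : r < -lam := by nlinarith
      rw [st_of_lt hr' hlam.le]; ring
  set wt : (Fin n → ℝ) → ℝ := fun y => ((∑ i ∈ A, μ i * (y i - lam * σ i)) - c) / s with hwt
  have hsumsplit : ∀ (y : Fin n → ℝ) (W : ℝ),
      (∀ i ∈ A, lam < σ i * (y i - W * μ i)) →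
      (∀ i, i ∉ A → |y i - W * μ i| < lam) →
      ∑ i, μ i * st lam (y i - W * μ i)
        = (∑ i ∈ A, μ i * (y i - lam * σ i)) - W * s := by
    intro y W h1 h2
    have e1 : ∑ i, μ i * st lam (y i - W * μ i) = ∑ i ∈ A, μ i * st lam (y i - W * μ i) := by
      refine (Finset.sum_subset (Finset.subset_univ A) ?_).symm
      intro i _ hi
      rw [st_of_abs_le (h2 i hi).le hlam.le, mul_zero]
    rw [e1]
    have e2 : ∑ i ∈ A, μ i * st lam (y i - W * μ i)
        = ∑ i ∈ A, μ i * (y i - W * μ i - lam * σ i) :=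
      Finset.sum_congr rfl (fun i hi => by rw [hstform i _ (h1 i hi)])
    rw [e2, hs, Finset.mul_sum, ← Finset.sum_sub_distrib]
    exact Finset.sum_congr rfl (fun i _ => by ring)
  have hwx : wt x = w x := by
    have hsum := hw x
    rw [hsumsplit x (w x) hsigx hnotA] at hsum
    rw [hwt]
    simp only
    rw [div_eq_iff hspos.ne']
    linarith
  have hwt_cont : Continuous wt := by
    rw [hwt]
    apply Continuous.div_const
    apply Continuous.sub _ continuous_const
    apply continuous_finset_sum
    intro i _
    exact continuous_const.mul ((continuous_apply i).sub continuous_const)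
  have hEv1 : ∀ᶠ y in nhds x, ∀ i, i ∈ A → lam < σ i * (y i - wt y * μ i) := by
    rw [Filter.eventually_all]
    intro i
    by_cases hi : i ∈ A
    · have hc1 : Continuous fun y : Fin n → ℝ => σ i * (y i - wt y * μ i) :=
        continuous_const.mul ((continuous_apply i).sub (hwt_cont.mul continuous_const))
      have hval : lam < σ i * (x i - wt x * μ i) := by rw [hwx]; exact hsigx i hi
      exact (hc1.continuousAt.eventually_const_lt hval).mono (fun y h _ => h)
    · exact Filter.Eventually.of_forall (fun y h => absurd h hi)
  have hEv2 : ∀ᶠ y in nhds x, ∀ i, i ∉ A → |y i - wt y * μ i| < lam := by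
    rw [Filter.eventually_all]
    intro i
    by_cases hi : i ∈ A
    · exact Filter.Eventually.of_forall (fun y h => absurd hi h)
    · have hc1 : Continuous fun y : Fin n → ℝ => |y i - wt y * μ i| :=
        ((continuous_apply i).sub (hwt_cont.mul continuous_const)).abs
      have hval : |x i - wt x * μ i| < lam := by rw [hwx]; exact hnotA i hi
      exact (hc1.continuousAt.eventually_lt_const hval).mono (fun y h _ => h)
  -- the constant part of the affine local formula
  set k : Fin n → ℝ := fun i =>
    if i ∈ A then μ i * ((lam * ∑ j ∈ A, μ j * σ j) + c) / s - lam * σ i else 0 with hk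
  set M : Matrix (Fin n) (Fin n) ℝ :=
    Matrix.diagonal (fun i => if lam < |x i - w x * μ i| then (1 : ℝ) else 0)
      - (1 / s) • Matrix.of (fun i j =>
          ((if lam < |x i - w x * μ i| then (1 : ℝ) else 0) * μ i) *
          ((if lam < |x j - w x * μ j| then (1 : ℝ) else 0) * μ j)) with hM
  have hkey : ∀ (v : Fin n → ℝ) (i : Fin n), M.mulVec v i
      = (if i ∈ A then (1:ℝ) else 0) * v i
        - (1/s) * ((if i ∈ A then (1:ℝ) else 0) * μ i) * ∑ j ∈ A, μ j * v j := by
    intro v i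
    rw [hM, Matrix.sub_mulVec]
    simp only [Pi.sub_apply]
    congr 1
    · rw [Matrix.mulVec_diagonal]
      congr 1
      simp [hmemA i]
    · rw [Matrix.smul_mulVec]
      simp only [Pi.smul_apply, smul_eq_mul]
      have : (Matrix.of (fun i j =>
          ((if lam < |x i - w x * μ i| then (1 : ℝ) else 0) * μ i) *
          ((if lam < |x j - w x * μ j| then (1 : ℝ) else 0) * μ j))).mulVec v i
          = ((if i ∈ A then (1:ℝ) else 0) * μ i) * ∑ j ∈ A, μ j * v j := by
        rw [Matrix.mulVec, dotProduct]
        simp only [Matrix.of_apply]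
        have e1 : ∀ j, ((if lam < |x i - w x * μ i| then (1 : ℝ) else 0) * μ i) *
            ((if lam < |x j - w x * μ j| then (1 : ℝ) else 0) * μ j) * v j
            = ((if i ∈ A then (1:ℝ) else 0) * μ i) *
              (if lam < |x j - w x * μ j| then μ j * v j else 0) := by
          intro j
          by_cases hj : lam < |x j - w x * μ j| <;>
            simp [hj, hmemA i] <;> ring
        rw [Finset.sum_congr rfl (fun j _ => e1 j), ← Finset.mul_sum]
        congr 1
        rw [hA, Finset.sum_filter]
      rw [this]
      ring
  have hsumexp : ∀ y : Fin n → ℝ, ∑ i ∈ A, μ i * (y i - lam * σ i)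
      = (∑ i ∈ A, μ i * y i) - lam * ∑ i ∈ A, μ i * σ i := by
    intro y
    rw [Finset.mul_sum, ← Finset.sum_sub_distrib]
    exact Finset.sum_congr rfl (fun i _ => by ring)
  have hEvEq : P =ᶠ[nhds x] fun y => M.mulVec y + k := by
    filter_upwards [hEv1, hEv2] with y hy1 hy2
    have hFeq : ∑ i, μ i * st lam (y i - wt y * μ i) = c := by
      rw [hsumsplit y (wt y) (fun i hi => hy1 i hi) (fun i hi => hy2 i hi)]
      rw [hwt]
      simp only
      rw [div_mul_cancel₀ _ hspos.ne']
      ring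
    have hwy : w y = wt y := w_unique μ hμ hlam hc y (hw y) hFeq
    rw [hP y]
    funext i
    simp only [Pi.add_apply]
    rw [hkey y i, hwy]
    by_cases hi : i ∈ A
    · rw [hstform i _ (hy1 i hi)]
      rw [hk]
      simp only [if_pos hi]
      rw [hwt]
      simp only
      rw [hsumexp y]
      field_simp
      ring
    · rw [st_of_abs_le (hy2 i hi).le hlam.le]
      rw [hk]
      simp only [if_neg hi]
      simp
  have hlin : HasFDerivAt (fun y : Fin n → ℝ => M.mulVec y + k)
      (LinearMap.toContinuousLinearMap (Matrix.mulVecLin M)) x := by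
    have h1 : HasFDerivAt (fun y : Fin n → ℝ =>
        (LinearMap.toContinuousLinearMap (Matrix.mulVecLin M)) y + k)
        (LinearMap.toContinuousLinearMap (Matrix.mulVecLin M)) x :=
      (LinearMap.toContinuousLinearMap (Matrix.mulVecLin M)).hasFDerivAt.add_const k
    convert h1 using 2
    rfl
  exact hlin.congr_of_eventuallyEq hEvEq
end
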